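/- (Orderability Characterization) A directed multigraph D is orderable under pebble distribution p if and only if (1) every vertex has nonnegative balance, and (2) every nontrivial sink component of the component digraph of D contains a vertex with balance at least one. -/

import Mathlib

variable {V : Type*} [DecidableEq V]

/-- Result of a pebbling move `u → v`: remove two pebbles from `u`, add one to `v`. -/
def applyMove (p : V → ℕ) (u v : V) (x : V) : ℕ :=
  (if x = u then p x - 2 else p x) + (if x = v then 1 else 0)

/-- A list of moves is a valid sequence of pebbling moves from `p` in `G`. -/
def IsValidSeq (G : SimpleGraph V) : (V → ℕ) → List (V × V) → Prop
  | _, [] => True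
  | p, m :: rest => G.Adj m.1 m.2 ∧ 2 ≤ p m.1 ∧ IsValidSeq G (applyMove p m.1 m.2) rest

/-- The distribution after executing a sequence of pebbling moves. -/
def applySeq (p : V → ℕ) : List (V × V) → V → ℕ
  | [] => p
  | m :: rest => applySeq (applyMove p m.1 m.2) rest

/-- Indegree of a vertex in a directed multigraph (multiset of directed edges). -/
def indeg (D : Multiset (V × V)) (v : V) : ℕ :=
  Multiset.card (D.filter fun e => e.2 = v)

/-- Outdegree of a vertex in a directed multigraph. -/
def outdeg (D : Multiset (V × V)) (v : V) : ℕ :=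
  Multiset.card (D.filter fun e => e.1 = v)

/-- balance(D,p,v) = p(v) + indeg_D(v) - 2·outdeg_D(v). -/
def balance (D : Multiset (V × V)) (p : V → ℕ) (v : V) : ℤ :=
  (p v : ℤ) + (indeg D v : ℤ) - 2 * (outdeg D v : ℤ)

/-- `D` is orderable under `p`: some ordering of the edge multiset of `D`
is a valid sequence of pebbling moves. -/
def Orderable (G : SimpleGraph V) (D : Multiset (V × V)) (p : V → ℕ) : Prop :=
  ∃ σ : List (V × V), (σ : Multiset (V × V)) = D ∧ IsValidSeq G p σ

/-- A directed multigraph is acyclic if its edge relation admits no directed cycle. -/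
def DAcyclic (D : Multiset (V × V)) : Prop :=
  ∀ v : V, ¬ Relation.TransGen (fun a b => (a, b) ∈ D) v v

/-- The strongly connected component of `a` in the directed multigraph `D`. -/
def SCC (D : Multiset (V × V)) (a : V) : Set V :=
  {b | Relation.ReflTransGen (fun x y => (x, y) ∈ D) a b ∧
       Relation.ReflTransGen (fun x y => (x, y) ∈ D) b a}

/-! Executing a valid sequence `σ` leaves exactly `balance σ p v` pebbles on each vertex `v`, which
gives nonnegativity; and in a set `T` that no edge leaves, the target of the last move into `T`
keeps its pebble, since no later move starts in `T`. Conversely, take a vertex `v` of balance at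
least one in a sink component `S`, together with an edge `uv` coming from `S` if there is one;
otherwise `S = {v}` and `v` has no outgoing edge. Removing `uv` raises the balance of `u` by two and
preserves both conditions, so the rest of `D` can be ordered by induction, and `uv` is performed
last from the at least two pebbles then on `u`. The induction runs on the equivalent condition that
every closed vertex set receiving an edge contains a vertex of positive balance. -/

section Reachability

omit [DecidableEq V]

def OutClosed (D : Multiset (V × V)) (T : Set V) : Prop :=
  ∀ e ∈ D, e.1 ∈ T → e.2 ∈ T

abbrev Reach (D : Multiset (V × V)) : V → V → Prop :=
  Relation.ReflTransGen fun x y => (x, y) ∈ D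

variable {D : Multiset (V × V)}

lemma OutClosed.mem_of_reach {T : Set V} (hT : OutClosed D T) {a b : V} (ha : a ∈ T)
    (hab : Reach D a b) : b ∈ T := by
  induction hab with
  | refl => exact ha
  | tail _ hedge ih => exact hT _ hedge ih

lemma mem_scc_self (D : Multiset (V × V)) (a : V) : a ∈ SCC D a :=
  ⟨.refl, .refl⟩

lemma scc_eq_of_mem {a b : V} (h : b ∈ SCC D a) : SCC D a = SCC D b := by
  ext c
  exact ⟨fun hc => ⟨h.2.trans hc.1, hc.2.trans h.1⟩, fun hc => ⟨h.1.trans hc.1, hc.2.trans h.2⟩⟩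

lemma exists_scc_pred {a b v : V} (hv : v ∈ SCC D a) (hb : b ∈ SCC D a) (hbv : b ≠ v) :
    ∃ y ∈ SCC D a, (y, v) ∈ D := by
  rw [scc_eq_of_mem hv] at hb ⊢
  rcases hb.2.cases_tail with h | ⟨y, hby, hyv⟩
  · exact absurd h.symm hbv
  · exact ⟨y, ⟨hb.1.trans hby, .single hyv⟩, hyv⟩

lemma exists_reach_outClosed_scc {e : V × V} (he : e ∈ D) :
    ∃ f ∈ D, Reach D e.2 f.2 ∧ OutClosed D (SCC D f.2) := by
  classical
  set targets := D.toFinset.image Prod.snd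
  set R : Finset V := targets.filter (Reach D e.2)
  have he2 : e.2 ∈ R := Finset.mem_filter.mpr ⟨Finset.mem_image_of_mem _ (by simpa), .refl⟩
  -- a target reaching the fewest targets reaches only targets that reach it back
  obtain ⟨a, haR, hmin⟩ := Finset.exists_min_image R (fun x => (R.filter (Reach D x)).card) ⟨_, he2⟩
  obtain ⟨haT, hea⟩ := Finset.mem_filter.mp haR
  obtain ⟨f, hf, rfl⟩ := Finset.mem_image.mp haT
  have hsink : ∀ c ∈ targets, Reach D f.2 c → Reach D c f.2 := by
    intro c hc hac
    have hcR : c ∈ R := Finset.mem_filter.mpr ⟨hc, hea.trans hac⟩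
    have hsub : R.filter (Reach D c) ⊆ R.filter (Reach D f.2) := fun x hx =>
      Finset.mem_filter.mpr ⟨(Finset.mem_filter.mp hx).1, hac.trans (Finset.mem_filter.mp hx).2⟩
    have heq := Finset.eq_of_subset_of_card_le hsub (hmin c hcR)
    have hself : f.2 ∈ R.filter (Reach D f.2) := Finset.mem_filter.mpr ⟨haR, .refl⟩
    exact (Finset.mem_filter.mp (heq ▸ hself)).2
  refine ⟨f, Multiset.mem_toFinset.mp hf, hea, fun g hg hg1 => ?_⟩
  have hreach : Reach D f.2 g.2 := hg1.1.tail hg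
  exact ⟨hreach, hsink _ (Finset.mem_image_of_mem _ (by simpa)) hreach⟩

end Reachability

section Pebbling

variable {G : SimpleGraph V} {D : Multiset (V × V)} {p : V → ℕ}

lemma balance_cons (m : V × V) (D : Multiset (V × V)) (p : V → ℕ) (w : V) :
    balance (m ::ₘ D) p w =
      balance D p w + (if m.2 = w then 1 else 0) - (if m.1 = w then 2 else 0) := by
  simp only [balance, indeg, outdeg, Multiset.filter_cons]
  split_ifs <;> push_cast [Multiset.card_add, Multiset.card_singleton, zero_add] <;> ring

lemma balance_erase {e : V × V} (he : e ∈ D) (p : V → ℕ) (w : V) :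
    balance (D.erase e) p w =
      balance D p w + (if e.1 = w then 2 else 0) - (if e.2 = w then 1 else 0) := by
  conv_rhs => rw [← Multiset.cons_erase he, balance_cons]
  ring

lemma natCast_applyMove {u : V} (hu : 2 ≤ p u) (v x : V) :
    (applyMove p u v x : ℤ) = p x - (if u = x then 2 else 0) + (if v = x then 1 else 0) := by
  simp only [applyMove, eq_comm (a := x)]
  split_ifs <;> subst_vars <;> push_cast [Nat.cast_sub hu] <;> ring

lemma applySeq_eq_balance :
    ∀ {σ : List (V × V)} {p : V → ℕ}, IsValidSeq G p σ →
      ∀ w, (applySeq p σ w : ℤ) = balance (σ : Multiset (V × V)) p w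
  | [], _, _, w => by simp [applySeq, balance, indeg, outdeg]
  | m :: rest, p, ⟨_, hp, hrest⟩, w => by
    rw [applySeq, applySeq_eq_balance hrest, ← Multiset.cons_coe, balance_cons]
    simp only [balance, natCast_applyMove hp]
    ring

lemma le_applySeq_of_forall_ne {x : V} :
    ∀ {σ : List (V × V)} {p : V → ℕ}, (∀ e ∈ σ, e.1 ≠ x) → p x ≤ applySeq p σ x
  | [], _, _ => le_rfl
  | m :: rest, p, h => by
    have hm : m.1 ≠ x := h m List.mem_cons_self
    calc p x ≤ applyMove p m.1 m.2 x := by simp [applyMove, Ne.symm hm]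
      _ ≤ applySeq p (m :: rest) x :=
        le_applySeq_of_forall_ne fun e he => h e (List.mem_cons_of_mem m he)

lemma exists_pos_applySeq_of_outClosed {T : Set V} :
    ∀ {σ : List (V × V)} {p : V → ℕ}, OutClosed (σ : Multiset (V × V)) T →
      (∃ e ∈ σ, e.2 ∈ T) → ∃ w ∈ T, 1 ≤ applySeq p σ w
  | [], _, _, ⟨_, he, _⟩ => absurd he List.not_mem_nil
  | m :: rest, p, hT, hin => by
    have hTrest : OutClosed (rest : Multiset (V × V)) T :=
      fun e he => hT e (List.mem_cons_of_mem m he)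
    by_cases hlater : ∃ e ∈ rest, e.2 ∈ T
    · exact exists_pos_applySeq_of_outClosed (σ := rest) (p := applyMove p m.1 m.2) hTrest hlater
    push Not at hlater
    have hm : m.2 ∈ T := by
      obtain ⟨e, he, heT⟩ := hin
      rcases List.mem_cons.mp he with rfl | he
      · exact heT
      · exact absurd heT (hlater e he)
    have hpebble : 1 ≤ applyMove p m.1 m.2 m.2 := by simp [applyMove]
    refine ⟨m.2, hm, hpebble.trans (le_applySeq_of_forall_ne fun e he h => ?_)⟩
    exact hlater e he (hTrest e he (h ▸ hm))

lemma isValidSeq_append_singleton {u v : V} (huv : G.Adj u v) :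
    ∀ {σ : List (V × V)} {p : V → ℕ}, IsValidSeq G p σ → 2 ≤ applySeq p σ u →
      IsValidSeq G p (σ ++ [(u, v)])
  | [], _, _, hu => ⟨huv, hu, trivial⟩
  | _ :: _, _, ⟨hm, hp, hrest⟩, hu => ⟨hm, hp, isValidSeq_append_singleton huv hrest hu⟩

end Pebbling

section Characterization

variable {G : SimpleGraph V} {D : Multiset (V × V)} {p : V → ℕ}

def PositiveOnClosedSets (D : Multiset (V × V)) (p : V → ℕ) : Prop :=
  ∀ T : Set V, OutClosed D T → (∃ e ∈ D, e.2 ∈ T) → ∃ v ∈ T, 1 ≤ balance D p v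

lemma positiveOnClosedSets_iff_forall_sink_scc :
    PositiveOnClosedSets D p ↔
      ∀ a : V, (∀ e ∈ D, e.1 ∈ SCC D a → e.2 ∈ SCC D a) →
        (∃ e ∈ D, e.1 ∈ SCC D a ∨ e.2 ∈ SCC D a) → ∃ v ∈ SCC D a, 1 ≤ balance D p v := by
  constructor
  · rintro hpos a hsink ⟨e, he, hS⟩
    exact hpos _ hsink ⟨e, he, hS.elim (hsink e he) id⟩
  · rintro hscc T hT ⟨e, he, heT⟩
    obtain ⟨f, hf, hef, hsink⟩ := exists_reach_outClosed_scc he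
    obtain ⟨v, hv, hbv⟩ := hscc f.2 hsink ⟨f, hf, .inr (mem_scc_self D f.2)⟩
    exact ⟨v, hT.mem_of_reach (hT.mem_of_reach heT hef) hv.1, hbv⟩

lemma Orderable.balance_nonneg (h : Orderable G D p) (v : V) : 0 ≤ balance D p v := by
  obtain ⟨σ, rfl, hσ⟩ := h
  rw [← applySeq_eq_balance hσ]
  positivity

lemma Orderable.positiveOnClosedSets (h : Orderable G D p) : PositiveOnClosedSets D p := by
  obtain ⟨σ, rfl, hσ⟩ := h
  rintro T hT ⟨e, he, heT⟩
  obtain ⟨w, hw, hpos⟩ := exists_pos_applySeq_of_outClosed (p := p) hT ⟨e, he, heT⟩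
  exact ⟨w, hw, by rw [← applySeq_eq_balance hσ]; exact_mod_cast hpos⟩

lemma PositiveOnClosedSets.exists_last_edge (hpos : PositiveOnClosedSets D p) {e : V × V}
    (he : e ∈ D) :
    ∃ u v, (u, v) ∈ D ∧ 1 ≤ balance D p v ∧ (Reach D v u ∨ ∀ f ∈ D, f.1 ≠ v) := by
  obtain ⟨f, hf, -, hsink⟩ := exists_reach_outClosed_scc he
  obtain ⟨v, hv, hbv⟩ := hpos _ hsink ⟨f, hf, mem_scc_self D f.2⟩
  by_cases hpred : ∃ u ∈ SCC D f.2, (u, v) ∈ D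
  · obtain ⟨u, hu, huv⟩ := hpred
    exact ⟨u, v, huv, hbv, .inl (scc_eq_of_mem hv ▸ hu).1⟩
  have hsingle : ∀ b ∈ SCC D f.2, b = v := fun b hb =>
    by_contra fun hbv => hpred (exists_scc_pred hv hb hbv)
  obtain rfl : f.2 = v := hsingle _ (mem_scc_self D f.2)
  refine ⟨f.1, f.2, hf, hbv, .inr fun g hg hg1 => hpred ⟨g.1, hg1 ▸ hv, ?_⟩⟩
  rwa [← hsingle g.2 (hsink g hg (hg1 ▸ hv))]

lemma OutClosed.of_erase {T : Set V} {u v : V} (hT : OutClosed (D.erase (u, v)) T)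
    (hu : u ∉ T) : OutClosed D T := by
  intro e he h1
  refine hT e ((Multiset.mem_erase_of_ne ?_).mpr he) h1
  rintro rfl
  exact hu h1

lemma balance_erase_nonneg (hbal : ∀ w, 0 ≤ balance D p w) {u v : V} (huv : (u, v) ∈ D)
    (hne : u ≠ v) (hv : 1 ≤ balance D p v) (w : V) : 0 ≤ balance (D.erase (u, v)) p w := by
  rw [balance_erase huv]
  have := hbal w
  by_cases hvw : v = w
  · subst hvw
    simp only [hne, if_false, if_true]
    omega
  · split_ifs <;> omega

lemma PositiveOnClosedSets.exists_erase_of_not_mem (hpos : PositiveOnClosedSets D p)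
    {u v : V} (huv : (u, v) ∈ D) {T : Set V} (hT : OutClosed (D.erase (u, v)) T)
    (hin : ∃ e ∈ D.erase (u, v), e.2 ∈ T) (hu : u ∉ T) (hv : v ∉ T) :
    ∃ w ∈ T, 1 ≤ balance (D.erase (u, v)) p w := by
  obtain ⟨e, he, heT⟩ := hin
  obtain ⟨w, hw, hbw⟩ := hpos T (hT.of_erase hu) ⟨e, Multiset.mem_of_mem_erase he, heT⟩
  refine ⟨w, hw, ?_⟩
  rw [balance_erase huv, if_neg (ne_of_mem_of_not_mem hw hu).symm,
    if_neg (ne_of_mem_of_not_mem hw hv).symm]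
  simpa using hbw

lemma PositiveOnClosedSets.erase (hpos : PositiveOnClosedSets D p)
    (hbal : ∀ w, 0 ≤ balance D p w) {u v : V} (huv : (u, v) ∈ D) (hne : u ≠ v)
    (hlast : Reach D v u ∨ ∀ f ∈ D, f.1 ≠ v) : PositiveOnClosedSets (D.erase (u, v)) p := by
  intro T hT hin
  by_cases hu : u ∈ T
  · refine ⟨u, hu, ?_⟩
    rw [balance_erase huv, if_pos rfl, if_neg hne.symm]
    linarith [hbal u]
  by_cases hv : v ∉ T
  · exact hpos.exists_erase_of_not_mem huv hT hin hu hv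
  push Not at hv
  rcases hlast with hvu | hout
  · exact absurd ((hT.of_erase hu).mem_of_reach hv hvu) hu
  by_cases hvin : ∃ f ∈ D.erase (u, v), f.2 = v
  · obtain ⟨f, hf, hfv⟩ := hvin
    have hindeg : 0 < indeg (D.erase (u, v)) v :=
      Multiset.card_pos_iff_exists_mem.mpr ⟨f, Multiset.mem_filter.mpr ⟨hf, hfv⟩⟩
    have houtdeg : outdeg (D.erase (u, v)) v = 0 :=
      Multiset.card_eq_zero.mpr <| Multiset.filter_eq_nil.mpr fun g hg =>
        hout g (Multiset.mem_of_mem_erase hg)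
    refine ⟨v, hv, ?_⟩
    unfold balance
    omega
  -- `v` is now isolated, so it can be dropped from `T`
  push Not at hvin
  have hT' : OutClosed (D.erase (u, v)) (T \ {v}) := fun g hg hg1 =>
    ⟨hT g hg hg1.1, fun hgv => hvin g hg hgv⟩
  obtain ⟨e, he, heT⟩ := hin
  obtain ⟨w, hw, hbw⟩ := hpos.exists_erase_of_not_mem huv hT' ⟨e, he, heT, hvin e he⟩
    (fun h => hu h.1) (fun h => h.2 rfl)
  exact ⟨w, hw.1, hbw⟩

lemma orderable_of_balance_nonneg_of_positiveOnClosedSets (hG : ∀ e ∈ D, G.Adj e.1 e.2)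
    (hbal : ∀ v, 0 ≤ balance D p v) (hpos : PositiveOnClosedSets D p) : Orderable G D p := by
  induction hn : Multiset.card D generalizing D with
  | zero => exact ⟨[], (Multiset.card_eq_zero.mp hn).symm, trivial⟩
  | succ n ih =>
    obtain ⟨e, he⟩ := (Multiset.card_pos_iff_exists_mem (s := D)).mp (by omega)
    obtain ⟨u, v, huv, hv, hlast⟩ := hpos.exists_last_edge he
    have hne : u ≠ v := (hG _ huv).ne
    obtain ⟨σ, hσ, hvalid⟩ := ih (fun f hf => hG f (Multiset.mem_of_mem_erase hf))
      (balance_erase_nonneg hbal huv hne hv) (hpos.erase hbal huv hne hlast)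
      (by rw [Multiset.card_erase_of_mem huv, hn]; rfl)
    have hu : (applySeq p σ u : ℤ) = balance D p u + 2 := by
      rw [applySeq_eq_balance hvalid, hσ, balance_erase huv, if_pos rfl, if_neg hne.symm]
      ring
    refine ⟨σ ++ [(u, v)], ?_, isValidSeq_append_singleton (hG _ huv) hvalid ?_⟩
    · rw [← Multiset.coe_add, hσ, add_comm, Multiset.coe_singleton, Multiset.singleton_add,
        Multiset.cons_erase huv]
    · linarith [hbal u]

end Characterization

/-- Orderability Characterization: `D` is orderable under `p` iff every vertex has
nonnegative balance and every nontrivial sink component of the component digraph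
contains a vertex of balance at least one. -/
theorem orderability_characterization (G : SimpleGraph V) (D : Multiset (V × V)) (p : V → ℕ)
    (hG : ∀ e ∈ D, G.Adj e.1 e.2) :
    Orderable G D p ↔
      ((∀ v : V, 0 ≤ balance D p v) ∧
        ∀ a : V,
          (∀ e ∈ D, e.1 ∈ SCC D a → e.2 ∈ SCC D a) →   -- `SCC D a` is a sink component
          (∃ e ∈ D, e.1 ∈ SCC D a ∨ e.2 ∈ SCC D a) →    -- `SCC D a` is nontrivial
          ∃ v ∈ SCC D a, 1 ≤ balance D p v) := by
  rw [← positiveOnClosedSets_iff_forall_sink_scc]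
  exact ⟨fun h => ⟨h.balance_nonneg, h.positiveOnClosedSets⟩,
    fun ⟨hbal, hpos⟩ => orderable_of_balance_nonneg_of_positiveOnClosedSets hG hbal hpos⟩
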